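/- Suppose n = p + q is odd. Then for every element a of the Clifford algebra Cl = ℝ_{p,q} there exists a real number r (the scalar part of a) such that: (1) ∑_J e_J · a · e^J + ∑_J e_J · (involute a) · e^J = algebraMap ℝ Cl (2^{n+1} · r), where each sum runs over all subsets J of Fin n and involute denotes the principal (grade) involution of Cl; and (2) a − algebraMap ℝ Cl r lies in the ℝ-linear span of the set { e_I : I a nonempty finite subset of Fin n }. -/

import Mathlib

noncomputable section

/-- The weights of the quadratic form of signature `(p, q)`: `1` for the first `p`
coordinates and `-1` for the remaining ones. -/
def cliffordWeight (p : ℕ) {n : ℕ} (i : Fin n) : ℝ := if (i : ℕ) < p then 1 else -1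

/-- The quadratic form of signature `(p, q)` on `Fin (p + q) → ℝ`. -/
def cliffordQ (p q : ℕ) : QuadraticForm ℝ (Fin (p + q) → ℝ) :=
  QuadraticMap.weightedSumSquares ℝ (cliffordWeight p)

/-- The generator `e i` of the Clifford algebra `ℝ_{p,q}`. -/
def cliffordE (p q : ℕ) (i : Fin (p + q)) : CliffordAlgebra (cliffordQ p q) :=
  CliffordAlgebra.ι (cliffordQ p q) (Pi.single i 1)

/-- `e_J`: the product of the generators `e j` for `j ∈ J`, in increasing order. -/
def eLower (p q : ℕ) (J : Finset (Fin (p + q))) : CliffordAlgebra (cliffordQ p q) :=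
  ((J.sort (· ≤ ·)).map (cliffordE p q)).prod

/-- `e^J`: the product of the elements `w j • e j` for `j ∈ J`, in decreasing order. -/
def eUpper (p q : ℕ) (J : Finset (Fin (p + q))) : CliffordAlgebra (cliffordQ p q) :=
  ((J.sort (· ≤ ·)).reverse.map (fun j => cliffordWeight p j • cliffordE p q j)).prod

/-!
Conjugating a basis blade by `e_J` only changes its sign:
`e_J e_I e^J = (∏_{j ∈ J} (-1)^{|I \ {j}|}) e_I`, and in particular `e_J e^J = 1`.
Summed over all `J`, the signs factorise as `∏_j (1 + (-1)^{|I \ {j}|})`, which vanishes for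
even nonempty `I` (any `j ∈ I` gives an odd exponent); for odd `I` the grade involution flips
the sign of `e_I`, so the two sums cancel. Hence the combined sum kills every `e_I` with
`I ≠ ∅` and multiplies scalars by `2^(n+1)`, and the `e_I` span the algebra.
-/

open CliffordAlgebra
open scoped symmDiff

section

variable {p q : ℕ}

theorem cliffordWeight_mul_self {n : ℕ} (i : Fin n) :
    cliffordWeight p i * cliffordWeight p i = 1 := by
  unfold cliffordWeight; split_ifs <;> norm_num

theorem cliffordQ_single (i : Fin (p + q)) :
    cliffordQ p q (Pi.single i 1) = cliffordWeight p i := by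
  simp [cliffordQ, QuadraticMap.weightedSumSquares_apply, Pi.single_apply]

theorem cliffordE_mul_self (i : Fin (p + q)) :
    cliffordE p q i * cliffordE p q i = algebraMap ℝ _ (cliffordWeight p i) := by
  rw [cliffordE, ι_sq_scalar, cliffordQ_single]

theorem cliffordE_mul_cliffordE_of_ne {i j : Fin (p + q)} (hij : i ≠ j) :
    cliffordE p q i * cliffordE p q j = -(cliffordE p q j * cliffordE p q i) := by
  refine ι_mul_ι_comm_of_isOrtho ?_
  rw [QuadraticMap.isOrtho_def]
  simp only [cliffordQ, QuadraticMap.weightedSumSquares_apply, ← Finset.sum_add_distrib]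
  refine Finset.sum_congr rfl fun k _ => ?_
  by_cases hi : k = i <;> by_cases hj : k = j <;> simp_all

@[simp]
theorem eLower_empty : eLower p q ∅ = 1 := by
  simp [eLower]

@[simp]
theorem eUpper_empty : eUpper p q ∅ = 1 := by
  simp [eUpper]

theorem eLower_insert_of_forall_lt {a : Fin (p + q)} {s : Finset (Fin (p + q))}
    (ha : ∀ b ∈ s, a < b) : eLower p q (insert a s) = cliffordE p q a * eLower p q s := by
  rw [eLower, Finset.sort_insert _ (fun b hb => (ha b hb).le) (fun h => (ha a h).false),
    List.map_cons, List.prod_cons, eLower]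

theorem eUpper_insert_of_forall_lt {a : Fin (p + q)} {s : Finset (Fin (p + q))}
    (ha : ∀ b ∈ s, a < b) :
    eUpper p q (insert a s) = eUpper p q s * (cliffordWeight p a • cliffordE p q a) := by
  rw [eUpper, Finset.sort_insert _ (fun b hb => (ha b hb).le) (fun h => (ha a h).false),
    List.reverse_cons, List.map_append, List.prod_append, eUpper]
  simp

theorem cliffordE_mul_eLower_comm (i : Fin (p + q)) (K : Finset (Fin (p + q))) :
    cliffordE p q i * eLower p q K =
      (-1 : ℝ) ^ (K.erase i).card • (eLower p q K * cliffordE p q i) := by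
  induction K using Finset.induction_on_min with
  | empty => simp
  | insert a s ha ih =>
    have has : a ∉ s := fun h => (ha a h).false
    rw [eLower_insert_of_forall_lt ha]
    obtain rfl | hia := eq_or_ne i a
    · rw [Finset.erase_insert has, mul_assoc, ih, Finset.erase_eq_of_notMem has, mul_smul_comm]
    · rw [Finset.erase_insert_of_ne hia.symm, Finset.card_insert_of_notMem (by simp [has]),
        ← mul_assoc, cliffordE_mul_cliffordE_of_ne hia, neg_mul, mul_assoc, ih, pow_succ,
        mul_neg_one, neg_smul, mul_smul_comm, mul_assoc]

theorem cliffordE_mul_eLower_mul_smul_cliffordE (j : Fin (p + q)) (I : Finset (Fin (p + q))) :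
    cliffordE p q j * eLower p q I * (cliffordWeight p j • cliffordE p q j) =
      (-1 : ℝ) ^ (I.erase j).card • eLower p q I := by
  rw [mul_smul_comm, cliffordE_mul_eLower_comm, smul_mul_assoc, mul_assoc, cliffordE_mul_self,
    Algebra.algebraMap_eq_smul_one, mul_smul_comm, mul_one, smul_comm (cliffordWeight p j),
    smul_smul (cliffordWeight p j), cliffordWeight_mul_self, one_smul]

theorem eLower_mul_eLower_mul_eUpper (J I : Finset (Fin (p + q))) :
    eLower p q J * eLower p q I * eUpper p q J =
      (∏ j ∈ J, (-1 : ℝ) ^ (I.erase j).card) • eLower p q I := by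
  induction J using Finset.induction_on_min with
  | empty => simp
  | insert a s ha ih =>
    rw [eLower_insert_of_forall_lt ha, eUpper_insert_of_forall_lt ha,
      Finset.prod_insert fun h => (ha a h).false, ← mul_assoc _ (eUpper p q s),
      mul_assoc (cliffordE p q a), mul_assoc (cliffordE p q a), ih,
      mul_smul_comm _ (cliffordE p q a), smul_mul_assoc,
      cliffordE_mul_eLower_mul_smul_cliffordE, smul_smul, mul_comm]

theorem eLower_mul_eUpper (J : Finset (Fin (p + q))) : eLower p q J * eUpper p q J = 1 := by
  simpa using eLower_mul_eLower_mul_eUpper J ∅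

theorem involute_eLower (I : Finset (Fin (p + q))) :
    involute (eLower p q I) = (-1 : ℝ) ^ I.card • eLower p q I := by
  induction I using Finset.induction_on_min with
  | empty => simp
  | insert a s ha ih =>
    rw [eLower_insert_of_forall_lt ha, map_mul, ih, cliffordE, involute_ι,
      Finset.card_insert_of_notMem fun h => (ha a h).false, pow_succ', mul_smul, neg_one_smul,
      neg_mul, mul_smul_comm]

theorem cliffordE_mul_eLower (i : Fin (p + q)) (K : Finset (Fin (p + q))) :
    ∃ c : ℝ, cliffordE p q i * eLower p q K = c • eLower p q ({i} ∆ K) := by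
  induction K using Finset.induction_on_min generalizing i with
  | empty => exact ⟨1, by rw [← Finset.bot_eq_empty, symmDiff_bot]; simp [eLower]⟩
  | insert a s ha ih =>
    rw [eLower_insert_of_forall_lt ha]
    rcases lt_trichotomy i a with hia | rfl | hai
    · have hi : ∀ b ∈ insert a s, i < b := by grind
      have hins : {i} ∆ insert a s = insert i (insert a s) := by
        ext x; simp only [Finset.mem_symmDiff, Finset.mem_insert, Finset.mem_singleton]; grind
      refine ⟨1, ?_⟩
      rw [hins, eLower_insert_of_forall_lt hi, eLower_insert_of_forall_lt ha, one_smul]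
    · have hdel : {i} ∆ insert i s = s := by
        ext x; simp only [Finset.mem_symmDiff, Finset.mem_insert, Finset.mem_singleton]; grind
      refine ⟨cliffordWeight p i, ?_⟩
      rw [hdel, ← mul_assoc, cliffordE_mul_self, Algebra.smul_def]
    · obtain ⟨c, hc⟩ := ih i
      have ha' : ∀ b ∈ {i} ∆ s, a < b := by
        simp only [Finset.mem_symmDiff, Finset.mem_singleton]; grind
      have hins : {i} ∆ insert a s = insert a ({i} ∆ s) := by
        ext x; simp only [Finset.mem_symmDiff, Finset.mem_insert, Finset.mem_singleton]; grind
      refine ⟨-c, ?_⟩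
      rw [hins, eLower_insert_of_forall_lt ha', ← mul_assoc,
        cliffordE_mul_cliffordE_of_ne hai.ne', neg_mul, mul_assoc, hc, mul_smul_comm, neg_smul]

theorem span_range_eLower : Submodule.span ℝ (Set.range (eLower p q)) = ⊤ := by
  refine Submodule.eq_top_iff'.2 fun a => ?_
  induction a using left_induction with
  | algebraMap r =>
    rw [Algebra.algebraMap_eq_smul_one, ← eLower_empty]
    exact Submodule.smul_mem _ _ (Submodule.subset_span ⟨∅, rfl⟩)
  | add x y hx hy => exact Submodule.add_mem _ hx hy
  | ι_mul x v hx =>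
    have hmulLeft (i : Fin (p + q)) : Submodule.span ℝ (Set.range (eLower p q)) ≤
        (Submodule.span ℝ (Set.range (eLower p q))).comap
          (LinearMap.mulLeft ℝ (cliffordE p q i)) := by
      refine Submodule.span_le.2 ?_
      rintro _ ⟨K, rfl⟩
      obtain ⟨c, hc⟩ := cliffordE_mul_eLower i K
      rw [SetLike.mem_coe, Submodule.mem_comap, LinearMap.mulLeft_apply, hc]
      exact Submodule.smul_mem _ c (Submodule.subset_span ⟨_, rfl⟩)
    have hv : ι (cliffordQ p q) v = ∑ i, v i • cliffordE p q i := by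
      simp_rw [cliffordE, ← map_smul, ← map_sum, ← Pi.single_smul, smul_eq_mul, mul_one,
        Finset.univ_sum_single]
    rw [hv, Finset.sum_mul]
    exact Submodule.sum_mem _ fun i _ => by
      rw [smul_mul_assoc]; exact Submodule.smul_mem _ _ (hmulLeft i hx)

def nonscalarSpan (p q : ℕ) : Submodule ℝ (CliffordAlgebra (cliffordQ p q)) :=
  Submodule.span ℝ {x | ∃ I : Finset (Fin (p + q)), I.Nonempty ∧ x = eLower p q I}

theorem exists_sub_algebraMap_mem_nonscalarSpan (a : CliffordAlgebra (cliffordQ p q)) :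
    ∃ r : ℝ, a - algebraMap ℝ _ r ∈ nonscalarSpan p q := by
  have hsub : Set.range (eLower p q) ⊆
      {1} ∪ {x | ∃ I : Finset (Fin (p + q)), I.Nonempty ∧ x = eLower p q I} := by
    rintro _ ⟨I, rfl⟩
    obtain rfl | hI := I.eq_empty_or_nonempty
    · exact Or.inl eLower_empty
    · exact Or.inr ⟨I, hI, rfl⟩
  have ha := Submodule.span_mono hsub (span_range_eLower.ge (Submodule.mem_top (x := a)))
  rw [Submodule.span_union, Submodule.mem_sup] at ha
  obtain ⟨_, hone, y, hy, rfl⟩ := ha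
  obtain ⟨r, rfl⟩ := Submodule.mem_span_singleton.1 hone
  exact ⟨r, by rwa [Algebra.algebraMap_eq_smul_one, add_sub_cancel_left]⟩

def conjSum (p q : ℕ) :
    CliffordAlgebra (cliffordQ p q) →ₗ[ℝ] CliffordAlgebra (cliffordQ p q) :=
  ∑ J : Finset (Fin (p + q)), LinearMap.mulLeftRight ℝ (eLower p q J, eUpper p q J)

theorem conjSum_apply (x : CliffordAlgebra (cliffordQ p q)) :
    conjSum p q x = ∑ J : Finset (Fin (p + q)), eLower p q J * x * eUpper p q J := by
  simp [conjSum]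

theorem conjSum_algebraMap (r : ℝ) :
    conjSum p q (algebraMap ℝ _ r) = algebraMap ℝ _ (2 ^ (p + q) * r) := by
  simp_rw [conjSum_apply, ← Algebra.commutes r, mul_assoc, eLower_mul_eUpper, mul_one,
    Finset.sum_const, Finset.card_univ, Fintype.card_finset, Fintype.card_fin, ← map_nsmul,
    nsmul_eq_mul, Nat.cast_pow, Nat.cast_ofNat]

theorem conjSum_eLower (I : Finset (Fin (p + q))) :
    conjSum p q (eLower p q I) = (∏ j, ((-1 : ℝ) ^ (I.erase j).card + 1)) • eLower p q I := by
  simp_rw [conjSum_apply, eLower_mul_eLower_mul_eUpper, ← Finset.sum_smul, Finset.prod_add_one,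
    Finset.powerset_univ]

theorem conjSum_eLower_add_conjSum_involute {I : Finset (Fin (p + q))} (hI : I.Nonempty) :
    conjSum p q (eLower p q I) + conjSum p q (involute (eLower p q I)) = 0 := by
  rw [involute_eLower, map_smul, conjSum_eLower, smul_smul, ← add_smul]
  rcases Nat.even_or_odd I.card with heven | hodd
  · obtain ⟨i, hi⟩ := hI
    have hodd' : Odd (I.erase i).card := by
      rw [Finset.card_erase_of_mem hi]
      exact Nat.Even.sub_odd (Finset.card_pos.2 ⟨i, hi⟩) heven odd_one
    rw [Finset.prod_eq_zero (Finset.mem_univ i) (by rw [hodd'.neg_one_pow]; norm_num)]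
    simp
  · simp [hodd.neg_one_pow]

theorem conjSum_add_conjSum_involute_of_mem_nonscalarSpan {x : CliffordAlgebra (cliffordQ p q)}
    (hx : x ∈ nonscalarSpan p q) : conjSum p q x + conjSum p q (involute x) = 0 := by
  have hker : nonscalarSpan p q ≤
      LinearMap.ker (conjSum p q + conjSum p q ∘ₗ involute.toLinearMap) :=
    Submodule.span_le.2 fun _ ⟨_, hI, hx⟩ => hx ▸ conjSum_eLower_add_conjSum_involute hI
  exact hker hx

end

theorem scalar_part_odd_general (p q : ℕ) (a : CliffordAlgebra (cliffordQ p q)) :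
    ∃ r : ℝ,
      ((∑ J : Finset (Fin (p + q)), eLower p q J * a * eUpper p q J) +
          ∑ J : Finset (Fin (p + q)),
            eLower p q J * CliffordAlgebra.involute a * eUpper p q J) =
        algebraMap ℝ (CliffordAlgebra (cliffordQ p q)) (2 ^ (p + q + 1) * r) ∧
      a - algebraMap ℝ (CliffordAlgebra (cliffordQ p q)) r ∈
        Submodule.span ℝ
          {x : CliffordAlgebra (cliffordQ p q) |
            ∃ I : Finset (Fin (p + q)), I.Nonempty ∧ x = eLower p q I} := by
  obtain ⟨r, hr⟩ := exists_sub_algebraMap_mem_nonscalarSpan a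
  refine ⟨r, ?_, hr⟩
  have hvanish := conjSum_add_conjSum_involute_of_mem_nonscalarSpan hr
  rw [map_sub, map_sub, AlgHom.commutes, map_sub, conjSum_algebraMap] at hvanish
  rw [← conjSum_apply, ← conjSum_apply, pow_succ, mul_two, add_mul, map_add,
    ← sub_eq_zero, ← hvanish]
  abel

theorem scalar_part_odd (p q : ℕ) (h : Odd (p + q)) (a : CliffordAlgebra (cliffordQ p q)) :
    ∃ r : ℝ,
      ((∑ J : Finset (Fin (p + q)), eLower p q J * a * eUpper p q J) +
          ∑ J : Finset (Fin (p + q)),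
            eLower p q J * CliffordAlgebra.involute a * eUpper p q J) =
        algebraMap ℝ (CliffordAlgebra (cliffordQ p q)) (2 ^ (p + q + 1) * r) ∧
      a - algebraMap ℝ (CliffordAlgebra (cliffordQ p q)) r ∈
        Submodule.span ℝ
          {x : CliffordAlgebra (cliffordQ p q) |
            ∃ I : Finset (Fin (p + q)), I.Nonempty ∧ x = eLower p q I} :=
  scalar_part_odd_general p q a
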